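/- Let E be a finite-dimensional real inner product space, let P be a symmetric positive semidefinite linear endomorphism of E, and let R be a symmetric linear endomorphism of E satisfying ⟨R v, v⟩ ≥ r‖v‖² for all v ∈ E, for some real number r. If trace(R ∘ P) = r · trace(P), then every eigenvector v of P with nonzero eigenvalue satisfies ⟨R v, v⟩ = r‖v‖². -/

import Mathlib

open RealInnerProductSpace

/-!
Put `S = R - r • id`. Then `S` and `P` are positive operators with `trace (S ∘ P) = 0`. In an
orthonormal eigenbasis `(bᵢ)` of `P` with eigenvalues `μᵢ ≥ 0` this trace is
`∑ μᵢ ⟪S bᵢ, bᵢ⟫`, a sum of nonnegative terms, so `⟪S bᵢ, bᵢ⟫ = 0` and hence `S bᵢ = 0` whenever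
`μᵢ ≠ 0`. An eigenvector of `P` with eigenvalue `μ ≠ 0` is a combination of the `bᵢ` with
`μᵢ = μ`, so `S` kills it.
-/

namespace LinearMap

variable {E : Type*} [NormedAddCommGroup E] [InnerProductSpace ℝ E]

theorem IsPositive.apply_eq_zero_of_inner_eq_zero {T : E →ₗ[ℝ] E} (hT : T.IsPositive) {x : E}
    (hx : ⟪T x, x⟫ = 0) : T x = 0 := by
  -- the form along the line `x + t • T x` is a quadratic in `t` with no constant term
  have hquad : ∀ t : ℝ, 0 ≤ ⟪T (T x), T x⟫ * (t * t) + 2 * ‖T x‖ ^ 2 * t + 0 := by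
    intro t
    have h := hT.inner_nonneg_left (x + t • T x)
    simp only [map_add, map_smul, inner_add_left, inner_add_right, real_inner_smul_left,
      real_inner_smul_right, hx, hT.isSymmetric (T x) x, real_inner_self_eq_norm_sq] at h
    linarith
  have hdisc : (2 * ‖T x‖ ^ 2) ^ 2 ≤ 0 := by simpa [discrim] using discrim_le_zero hquad
  simpa using (pow_eq_zero_iff two_ne_zero).mp (le_antisymm hdisc (sq_nonneg _))

theorem IsSymmetric.inner_eigenvectorBasis_eq_zero {P : E →ₗ[ℝ] E} (hP : P.IsSymmetric)
    [FiniteDimensional ℝ E] {n : ℕ} (hn : Module.finrank ℝ E = n) {μ : ℝ} {v : E}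
    (hv : P v = μ • v) {i : Fin n} (hi : hP.eigenvalues hn i ≠ μ) :
    ⟪hP.eigenvectorBasis hn i, v⟫ = 0 := by
  have h := hP (hP.eigenvectorBasis hn i) v
  rw [hP.apply_eigenvectorBasis, hv, real_inner_smul_left, real_inner_smul_right] at h
  exact (mul_eq_mul_right_iff.mp h.symm).resolve_left hi.symm

theorem IsSymmetric.apply_eq_zero_of_apply_eigenvectorBasis_eq_zero {P : E →ₗ[ℝ] E}
    (hP : P.IsSymmetric) [FiniteDimensional ℝ E] {n : ℕ} (hn : Module.finrank ℝ E = n)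
    {T : E →ₗ[ℝ] E} {μ : ℝ}
    (hT : ∀ i, hP.eigenvalues hn i = μ → T (hP.eigenvectorBasis hn i) = 0) {v : E}
    (hv : P v = μ • v) : T v = 0 := by
  rw [← (hP.eigenvectorBasis hn).sum_repr' v, map_sum]
  refine Finset.sum_eq_zero fun i _ => ?_
  by_cases hi : hP.eigenvalues hn i = μ
  · simp [hT i hi]
  · simp [hP.inner_eigenvectorBasis_eq_zero hn hv hi]

theorem trace_comp_eq_sum_eigenvalues_mul_inner {P : E →ₗ[ℝ] E} (hP : P.IsSymmetric)
    [FiniteDimensional ℝ E] {n : ℕ} (hn : Module.finrank ℝ E = n) (S : E →ₗ[ℝ] E) :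
    (S ∘ₗ P).trace ℝ E =
      ∑ i, hP.eigenvalues hn i * ⟪S (hP.eigenvectorBasis hn i), hP.eigenvectorBasis hn i⟫ := by
  rw [trace_eq_sum_inner _ (hP.eigenvectorBasis hn)]
  refine Finset.sum_congr rfl fun i _ => ?_
  rw [comp_apply, hP.apply_eigenvectorBasis, map_smul, real_inner_smul_right, real_inner_comm]
  rfl

theorem IsPositive.apply_eigenvectorBasis_eq_zero_of_trace_comp_eq_zero [FiniteDimensional ℝ E]
    {S P : E →ₗ[ℝ] E} (hS : S.IsPositive) (hP : P.IsPositive) (htr : (S ∘ₗ P).trace ℝ E = 0)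
    {n : ℕ} (hn : Module.finrank ℝ E = n) {i : Fin n} (hi : hP.isSymmetric.eigenvalues hn i ≠ 0) :
    S (hP.isSymmetric.eigenvectorBasis hn i) = 0 := by
  rw [trace_comp_eq_sum_eigenvalues_mul_inner hP.isSymmetric hn,
    Finset.sum_eq_zero_iff_of_nonneg fun j _ =>
      mul_nonneg (hP.nonneg_eigenvalues hn j) (hS.inner_nonneg_left _)] at htr
  exact hS.apply_eq_zero_of_inner_eq_zero
    ((mul_eq_zero.mp (htr i (Finset.mem_univ i))).resolve_left hi)

theorem IsPositive.apply_eq_zero_of_trace_comp_eq_zero [FiniteDimensional ℝ E]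
    {S P : E →ₗ[ℝ] E} (hS : S.IsPositive) (hP : P.IsPositive) (htr : (S ∘ₗ P).trace ℝ E = 0)
    {μ : ℝ} (hμ : μ ≠ 0) {v : E} (hv : P v = μ • v) : S v = 0 :=
  hP.isSymmetric.apply_eq_zero_of_apply_eigenvectorBasis_eq_zero rfl
    (fun _ hi => hS.apply_eigenvectorBasis_eq_zero_of_trace_comp_eq_zero hP htr rfl (hi ▸ hμ)) hv

end LinearMap

/-- Equality case: if `P` is symmetric positive semidefinite, `R` symmetric with
`⟪R v, v⟫ ≥ r‖v‖²`, and `trace (R ∘ P) = r * trace P`, then every eigenvector of `P`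
with nonzero eigenvalue satisfies `⟪R v, v⟫ = r‖v‖²`. -/
theorem inner_eq_of_trace_comp_eq
    {E : Type*} [NormedAddCommGroup E] [InnerProductSpace ℝ E] [FiniteDimensional ℝ E]
    (P R : E →ₗ[ℝ] E)
    (hP : LinearMap.IsSymmetric P) (hPpos : ∀ v : E, 0 ≤ ⟪P v, v⟫)
    (hR : LinearMap.IsSymmetric R) (r : ℝ) (hRlb : ∀ v : E, r * ‖v‖ ^ 2 ≤ ⟪R v, v⟫)
    (heq : LinearMap.trace ℝ E (R ∘ₗ P) = r * LinearMap.trace ℝ E P) :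
    ∀ (v : E) (μ : ℝ), v ≠ 0 → μ ≠ 0 → P v = μ • v → ⟪R v, v⟫ = r * ‖v‖ ^ 2 := by
  intro v μ _ hμ hv
  set S : E →ₗ[ℝ] E := R - r • LinearMap.id
  have hS_inner (w : E) : ⟪S w, w⟫ = ⟪R w, w⟫ - r * ‖w‖ ^ 2 := by
    rw [LinearMap.sub_apply, LinearMap.smul_apply, LinearMap.id_apply, inner_sub_left,
      real_inner_smul_left, real_inner_self_eq_norm_sq]
  have hS : S.IsPositive :=
    (LinearMap.isPositive_iff S).mpr ⟨hR.sub (LinearMap.IsSymmetric.id.smul rfl),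
      fun w => by rw [hS_inner]; linarith [hRlb w]⟩
  have htr : (S ∘ₗ P).trace ℝ E = 0 := by
    rw [LinearMap.sub_comp, LinearMap.smul_comp, LinearMap.id_comp, map_sub, map_smul, heq,
      smul_eq_mul, sub_self]
  have hPpos' : P.IsPositive := (LinearMap.isPositive_iff P).mpr ⟨hP, hPpos⟩
  have hSv : S v = 0 := hS.apply_eq_zero_of_trace_comp_eq_zero hPpos' htr hμ hv
  rw [← sub_eq_zero, ← hS_inner, hSv, inner_zero_left]
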